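/- Let X be a complex vector space, Φ ∈ X with Φ ≠ 0, v ∈ X, and let e : ℝ → ℂ be differentiable with e(t) ≠ 0 and |e(t)| = 1 for all t ∈ ℝ. If i e'(t) • Φ = e(t) • v for all t ∈ ℝ, then there exists μ ∈ ℝ such that v = (μ : ℂ) • Φ and e(t) = exp(-i μ (t - t₀)) · e(t₀) for all t, t₀ ∈ ℝ. -/

import Mathlib

/-! Writing `v = c • Φ`, the equation becomes the linear ODE `e' = -i c e`, whose solutions are
`e t = exp (-i c (t - t₀)) e t₀`; such an `e` has constant modulus only if `c` is real. -/

open Complex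

theorem eq_div_smul_of_smul_eq_smul {K V : Type*} [Field K] [AddCommGroup V] [Module K V]
    {a b : K} {x y : V} (hb : b ≠ 0) (h : a • x = b • y) : y = (a / b) • x := by
  rw [div_eq_inv_mul, mul_smul, h, inv_smul_smul₀ hb]

theorem eq_exp_mul_of_hasDerivAt_const_mul {f : ℝ → ℂ} {k : ℂ}
    (hf : ∀ t : ℝ, HasDerivAt f (k * f t) t) (t t₀ : ℝ) :
    f t = exp (k * (t - t₀)) * f t₀ := by
  set g : ℝ → ℂ := fun s => exp (-k * (s - t₀)) * f s
  have hg : ∀ s : ℝ, HasDerivAt g 0 s := by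
    intro s
    have hlin : HasDerivAt (fun s : ℝ => -k * ((s : ℂ) - t₀)) (-k) s := by
      simpa using ((hasDerivAt_id (s : ℂ)).sub_const (t₀ : ℂ)).const_mul (-k) |>.comp_ofReal
    exact (hlin.cexp.mul (hf s)).congr_deriv (by ring)
  have hconst : g t = g t₀ :=
    is_const_of_deriv_eq_zero (fun s => (hg s).differentiableAt) (fun s => (hg s).deriv) t t₀
  calc f t = exp (k * (t - t₀)) * g t := by
        simp only [g, ← mul_assoc, ← exp_add, add_neg_cancel, neg_mul, exp_zero, one_mul]
    _ = exp (k * (t - t₀)) * f t₀ := by rw [hconst]; simp [g]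

theorem im_eq_zero_of_norm_exp_neg_I_mul {c : ℂ} (h : ‖exp (-I * c)‖ = 1) : c.im = 0 := by
  rw [norm_exp, Real.exp_eq_one_iff] at h
  simpa using h

theorem separation_of_variables_ansatz_general
    {X : Type*} [AddCommGroup X] [Module ℂ X]
    (Φ : X) (hΦ : Φ ≠ 0) (v : X) (e : ℝ → ℂ) (e' : ℝ → ℂ)
    (he : ∀ t : ℝ, HasDerivAt e (e' t) t)
    (habs : ∀ t : ℝ, ‖e t‖ = 1)
    (heq : ∀ t : ℝ, (Complex.I * e' t) • Φ = e t • v) :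
    ∃ μ : ℝ, v = (μ : ℂ) • Φ ∧
      ∀ t t₀ : ℝ, e t = Complex.exp (-Complex.I * μ * (t - t₀)) * e t₀ := by
  have he0 : e 0 ≠ 0 := norm_ne_zero_iff.mp (by simp [habs 0])
  obtain ⟨c, hv⟩ : ∃ c : ℂ, v = c • Φ := ⟨_, eq_div_smul_of_smul_eq_smul he0 (heq 0)⟩
  have hode : ∀ t : ℝ, HasDerivAt e (-I * c * e t) t := by
    intro t
    have hc : I * e' t = e t * c := smul_left_injective ℂ hΦ (by simpa [hv, smul_smul] using heq t)
    exact (he t).congr_deriv (by linear_combination -I * hc + e' t * I_sq)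
  have hsol := eq_exp_mul_of_hasDerivAt_const_mul hode
  have hreal : (c.re : ℂ) = c := by
    refine Complex.ext rfl (im_eq_zero_of_norm_exp_neg_I_mul ?_).symm
    simpa [hsol 1 0, habs 0] using habs 1
  exact ⟨c.re, by rw [hreal, hv], fun t t₀ => by rw [hreal, hsol t t₀]⟩

theorem separation_of_variables_ansatz
    {X : Type*} [AddCommGroup X] [Module ℂ X]
    (Φ : X) (hΦ : Φ ≠ 0) (v : X) (e : ℝ → ℂ) (e' : ℝ → ℂ)
    (he : ∀ t : ℝ, HasDerivAt e (e' t) t)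
    (hne : ∀ t : ℝ, e t ≠ 0)
    (habs : ∀ t : ℝ, ‖e t‖ = 1)
    (heq : ∀ t : ℝ, (Complex.I * e' t) • Φ = e t • v) :
    ∃ μ : ℝ, v = (μ : ℂ) • Φ ∧
      ∀ t t₀ : ℝ, e t = Complex.exp (-Complex.I * μ * (t - t₀)) * e t₀ :=
  separation_of_variables_ansatz_general Φ hΦ v e e' he habs heq
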